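/- If n is odd and K is an n-dimensional simplex in ℝ^n, then Γ_{n+1}(K) ≤ n/(n+1). -/

import Mathlib

/-!
Every point of the convex hull of `m` points gives weight at least `1/m` to one of them, say
`v i`, so it lies in the image of the hull under the homothety of ratio `1 - 1/m` centred at
`v i`, which is the translate `(1/m) • v i +ᵥ (1 - 1/m) • K`. Taking `m = n + 1` vertices
gives `n + 1` translates of `(n/(n+1)) • K` covering the simplex `K`.
-/

open Set Pointwise

/-- The covering functional: the smallest `γ ≥ 0` such that `K` can be
covered by `m` translates of `γ • K`. -/
noncomputable def coveringFunctional {n : ℕ} (K : Set (EuclideanSpace ℝ (Fin n))) (m : ℕ) : ℝ :=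
  sInf {γ : ℝ | 0 ≤ γ ∧ ∃ x : Fin m → EuclideanSpace ℝ (Fin n),
    K ⊆ ⋃ i, x i +ᵥ γ • K}

section ConvexHull

variable {ι E : Type*} [AddCommGroup E] [Module ℝ E]

theorem Finset.sum_smul_mem_sum_smul_convexHull {s : Finset ι} (hs : s.Nonempty) {u : ι → ℝ}
    (hu : ∀ i ∈ s, 0 ≤ u i) {z : ι → E} {A : Set E} (hz : ∀ i ∈ s, z i ∈ A) :
    ∑ i ∈ s, u i • z i ∈ (∑ i ∈ s, u i) • convexHull ℝ A := by
  rcases (Finset.sum_nonneg hu).eq_or_lt with hsum | hsum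
  · have hu_zero : ∀ i ∈ s, u i = 0 := (Finset.sum_eq_zero_iff_of_nonneg hu).mp hsum.symm
    obtain ⟨i, hi⟩ := hs
    rw [← hsum, Set.zero_smul_set ⟨z i, subset_convexHull ℝ A (hz i hi)⟩,
      Finset.sum_eq_zero fun j hj => by rw [hu_zero j hj, zero_smul]]
    exact Set.zero_mem_zero
  · rw [← smul_inv_smul₀ hsum.ne' (∑ i ∈ s, u i • z i)]
    exact Set.smul_mem_smul_set (s.centerMass_mem_convexHull hu hsum hz)

theorem Finset.sum_smul_mem_vadd_smul_convexHull {s : Finset ι} {w : ι → ℝ}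
    (hw₀ : ∀ j ∈ s, 0 ≤ w j) (hw₁ : ∑ j ∈ s, w j = 1) {z : ι → E} {A : Set E}
    (hz : ∀ j ∈ s, z j ∈ A) {i : ι} (hi : i ∈ s) {t : ℝ} (ht : t ≤ w i) :
    ∑ j ∈ s, w j • z j ∈ t • z i +ᵥ (1 - t) • convexHull ℝ A := by
  classical
  set u : ι → ℝ := fun j => w j - if j = i then t else 0
  have hu : ∀ j ∈ s, 0 ≤ u j := by
    intro j hj
    by_cases hji : j = i
    · simp [u, hji, ht]
    · simp [u, hji, hw₀ j hj]
  have hu_sum : ∑ j ∈ s, u j = 1 - t := by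
    simp [u, Finset.sum_sub_distrib, hw₁, hi]
  have hu_smul_sum : ∑ j ∈ s, u j • z j = ∑ j ∈ s, w j • z j - t • z i := by
    simp [u, sub_smul, ite_smul, Finset.sum_sub_distrib, hi]
  rw [Set.mem_vadd_set]
  refine ⟨_, hu_sum ▸ s.sum_smul_mem_sum_smul_convexHull ⟨i, hi⟩ hu hz, ?_⟩
  rw [hu_smul_sum, vadd_eq_add, add_sub_cancel]

theorem convexHull_range_subset_iUnion_vadd_smul [Fintype ι] (v : ι → E) :
    convexHull ℝ (range v) ⊆
      ⋃ i, ((Fintype.card ι : ℝ)⁻¹ • v i) +ᵥ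
        (1 - (Fintype.card ι : ℝ)⁻¹) • convexHull ℝ (range v) := by
  intro x hx
  rw [convexHull_range_eq_exists_affineCombination] at hx
  obtain ⟨s, w, hw₀, hw₁, rfl⟩ := hx
  have hs : s.Nonempty := Finset.nonempty_of_sum_ne_zero (hw₁.symm ▸ one_ne_zero)
  obtain ⟨i, hi, hwi⟩ : ∃ i ∈ s, (s.card : ℝ)⁻¹ ≤ w i := by
    refine Finset.exists_le_of_sum_le hs ?_
    rw [Finset.sum_const, nsmul_eq_mul, hw₁,
      mul_inv_cancel₀ (by exact_mod_cast hs.card_pos.ne')]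
  have hcard : (Fintype.card ι : ℝ)⁻¹ ≤ (s.card : ℝ)⁻¹ :=
    inv_anti₀ (by exact_mod_cast hs.card_pos) (by exact_mod_cast s.card_le_univ)
  rw [s.affineCombination_eq_linear_combination v w hw₁]
  exact mem_iUnion.mpr ⟨i, s.sum_smul_mem_vadd_smul_convexHull hw₀ hw₁
    (fun j _ => mem_range_self j) hi (hcard.trans hwi)⟩

end ConvexHull

theorem coveringFunctional_le {n m : ℕ} {K : Set (EuclideanSpace ℝ (Fin n))} {γ : ℝ}
    (hγ : 0 ≤ γ) {x : Fin m → EuclideanSpace ℝ (Fin n)}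
    (hcover : K ⊆ ⋃ i, x i +ᵥ γ • K) :
    coveringFunctional K m ≤ γ :=
  csInf_le ⟨0, fun _ h => h.1⟩ ⟨hγ, x, hcover⟩

theorem covering_functional_odd_simplex_general {n : ℕ}
    (v : Fin (n + 1) → EuclideanSpace ℝ (Fin n))
    (K : Set (EuclideanSpace ℝ (Fin n)))
    (hK : K = convexHull ℝ (Set.range v)) :
    coveringFunctional K (n + 1) ≤ (n : ℝ) / (n + 1) := by
  have hratio : (n : ℝ) / (n + 1) = 1 - ((n + 1 : ℕ) : ℝ)⁻¹ := by
    push_cast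
    field_simp
    ring
  subst hK
  refine coveringFunctional_le (by positivity) (x := fun i => ((n + 1 : ℕ) : ℝ)⁻¹ • v i) ?_
  simpa only [hratio, Fintype.card_fin] using convexHull_range_subset_iUnion_vadd_smul v

theorem covering_functional_odd_simplex {n : ℕ} (hodd : Odd n)
    (v : Fin (n + 1) → EuclideanSpace ℝ (Fin n)) (hind : AffineIndependent ℝ v)
    (K : Set (EuclideanSpace ℝ (Fin n)))
    (hK : K = convexHull ℝ (Set.range v)) :
    coveringFunctional K (n + 1) ≤ (n : ℝ) / (n + 1) :=
  covering_functional_odd_simplex_general v K hK
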